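/- Let Γ = {(s_i, π(s_i))} be a set of state-action pairs sampled from a deterministic policy π, and let M' be M restricted by Γ (i.e., in each state s_i only action π(s_i) is available, elsewhere all actions remain). Then for every state s and horizon n: E_min^{M}(s,n) ≤ E_min^{M'}(s,n) ≤ E_π(s,n) ≤ E_max^{M'}(s,n) ≤ E_max^{M}(s,n). -/
import Mathlib


open Finset in
/-- Optimal (maximal) expected `n`-step accumulated reward. -/
noncomputable def Emax {S A : Type} [Fintype S] (P : S → A → S → ℝ) (R : S → ℝ)
    (Act : S → Finset A) (hA : ∀ s, (Act s).Nonempty) : ℕ → S → ℝ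
  | 0, s => R s
  | n+1, s => R s + (Act s).sup' (hA s) fun a => ∑ s', P s a s' * Emax P R Act hA n s'

open Finset in
/-- Pessimistic (minimal) expected `n`-step accumulated reward. -/
noncomputable def Emin {S A : Type} [Fintype S] (P : S → A → S → ℝ) (R : S → ℝ)
    (Act : S → Finset A) (hA : ∀ s, (Act s).Nonempty) : ℕ → S → ℝ
  | 0, s => R s
  | n+1, s => R s + (Act s).inf' (hA s) fun a => ∑ s', P s a s' * Emin P R Act hA n s'

/-- Expected `n`-step accumulated reward of the deterministic policy `π`. -/
noncomputable def Epi {S A : Type} [Fintype S] (P : S → A → S → ℝ) (R : S → ℝ)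
    (π : S → A) : ℕ → S → ℝ
  | 0, s => R s
  | n+1, s => R s + ∑ s', P s (π s) s' * Epi P R π n s'

/-- Restricting the MDP on a set `Γ` of states to the actions chosen by a
deterministic policy `π` tightens the optimistic and pessimistic estimates
around the value of `π`. -/
theorem restriction_by_policy_sample_bounds {S A : Type} [Fintype S] [Fintype A]
    [DecidableEq S]
    (P : S → A → S → ℝ) (hP : ∀ s a s', 0 ≤ P s a s') (R : S → ℝ)
    (Act : S → Finset A) (hA : ∀ s, (Act s).Nonempty)
    (π : S → A) (hπ : ∀ s, π s ∈ Act s)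
    (Γ : Finset S)
    (Act' : S → Finset A) (hAct' : ∀ s, Act' s = if s ∈ Γ then {π s} else Act s)
    (hA' : ∀ s, (Act' s).Nonempty) :
    ∀ (s : S) (n : ℕ),
      Emin P R Act hA n s ≤ Emin P R Act' hA' n s ∧
      Emin P R Act' hA' n s ≤ Epi P R π n s ∧
      Epi P R π n s ≤ Emax P R Act' hA' n s ∧
      Emax P R Act' hA' n s ≤ Emax P R Act hA n s := by

  have hsub : ∀ s, Act' s ⊆ Act s := by
    intro s a ha
    rw [hAct'] at ha
    split at ha
    · simp at ha; subst ha; exact hπ s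
    · exact ha
  have hmem : ∀ s, π s ∈ Act' s := by
    intro s
    rw [hAct']
    split
    · simp
    · exact hπ s
  intro s n
  induction n generalizing s with
  | zero => simp [Emin, Emax, Epi]
  | succ n ih =>
    refine ⟨?_, ?_, ?_, ?_⟩
    · simp only [Emin]
      gcongr ?_ + ?_
      · exact le_refl _
      apply Finset.le_inf'
      intro a ha
      calc (Act s).inf' (hA s) (fun a => ∑ s', P s a s' * Emin P R Act hA n s')
          ≤ ∑ s', P s a s' * Emin P R Act hA n s' :=
            Finset.inf'_le _ (hsub s ha)
        _ ≤ ∑ s', P s a s' * Emin P R Act' hA' n s' := by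
            apply Finset.sum_le_sum; intro s' _
            exact mul_le_mul_of_nonneg_left (ih s').1 (hP s a s')
    · simp only [Emin, Epi]
      gcongr ?_ + ?_
      · exact le_refl _
      calc (Act' s).inf' (hA' s) (fun a => ∑ s', P s a s' * Emin P R Act' hA' n s')
          ≤ ∑ s', P s (π s) s' * Emin P R Act' hA' n s' :=
            Finset.inf'_le _ (hmem s)
        _ ≤ ∑ s', P s (π s) s' * Epi P R π n s' := by
            apply Finset.sum_le_sum; intro s' _
            exact mul_le_mul_of_nonneg_left (ih s').2.1 (hP s (π s) s')
    · simp only [Emax, Epi]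
      gcongr ?_ + ?_
      · exact le_refl _
      calc ∑ s', P s (π s) s' * Epi P R π n s'
          ≤ ∑ s', P s (π s) s' * Emax P R Act' hA' n s' := by
            apply Finset.sum_le_sum; intro s' _
            exact mul_le_mul_of_nonneg_left (ih s').2.2.1 (hP s (π s) s')
        _ ≤ (Act' s).sup' (hA' s) (fun a => ∑ s', P s a s' * Emax P R Act' hA' n s') :=
            Finset.le_sup' (fun a => ∑ s', P s a s' * Emax P R Act' hA' n s') (hmem s)
    · simp only [Emax]
      gcongr ?_ + ?_
      · exact le_refl _
      apply Finset.sup'_le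
      intro a ha
      calc ∑ s', P s a s' * Emax P R Act' hA' n s'
          ≤ ∑ s', P s a s' * Emax P R Act hA n s' := by
            apply Finset.sum_le_sum; intro s' _
            exact mul_le_mul_of_nonneg_left (ih s').2.2.2 (hP s a s')
        _ ≤ (Act s).sup' (hA s) (fun a => ∑ s', P s a s' * Emax P R Act hA n s') :=
            Finset.le_sup' (fun a => ∑ s', P s a s' * Emax P R Act hA n s') (hsub s ha)
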